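/- arXiv:2106.03352 — 2 statements merged into one kernel-verified Lean document; each statement's English description precedes it below -/
import Mathlib

section
/- Consider the rock-paper-scissors payoff matrix M* = [[0,1,−1],[−1,0,1],[1,−1,0]] and the confidence set C consisting of M* together with the six matrices M_1, ..., M_6 obtained from M* by multiplying exactly one nonzero entry by 1.1 (specifically: M_1 has entry (1,2) = 1.1; M_2 has entry (1,3) = −1.1; M_3 has entry (2,1) = −1.1; M_4 has entry (2,3) = 1.1; M_5 has entry (3,1) = 1.1; M_6 has entry (3,2) = −1.1). Then there exist no matrices M̄, M̲ ∈ C and probability distributions μ, ν over {1,2,3} satisfying simultaneously: μᵀ M̄ ν ≥ max_{M ∈ C, μ'} (μ')ᵀ M ν and μᵀ M̲ ν ≤ min_{M ∈ C, ν'} μᵀ M ν'. -/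
open Matrix

/-- The probability simplex over `{1,2,3}`. -/
def RPSsimplex : Set (Fin 3 → ℝ) := {p | (∀ i, 0 ≤ p i) ∧ ∑ i, p i = 1}

/-- Rock-paper-scissors payoff matrix. -/
noncomputable def Mstar : Matrix (Fin 3) (Fin 3) ℝ :=
  !![0, 1, -1; -1, 0, 1; 1, -1, 0]

noncomputable def M1 : Matrix (Fin 3) (Fin 3) ℝ :=
  !![0, 11/10, -1; -1, 0, 1; 1, -1, 0]
noncomputable def M2 : Matrix (Fin 3) (Fin 3) ℝ :=
  !![0, 1, -11/10; -1, 0, 1; 1, -1, 0]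
noncomputable def M3 : Matrix (Fin 3) (Fin 3) ℝ :=
  !![0, 1, -1; -11/10, 0, 1; 1, -1, 0]
noncomputable def M4 : Matrix (Fin 3) (Fin 3) ℝ :=
  !![0, 1, -1; -1, 0, 11/10; 1, -1, 0]
noncomputable def M5 : Matrix (Fin 3) (Fin 3) ℝ :=
  !![0, 1, -1; -1, 0, 1; 11/10, -1, 0]
noncomputable def M6 : Matrix (Fin 3) (Fin 3) ℝ :=
  !![0, 1, -1; -1, 0, 1; 1, -11/10, 0]

/-- The confidence set `C`. -/
noncomputable def Cset : Set (Matrix (Fin 3) (Fin 3) ℝ) :=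
  {Mstar, M1, M2, M3, M4, M5, M6}

def ee (i : Fin 3) : Fin 3 → ℝ := fun k => if k = i then 1 else 0

lemma ee_mem (i : Fin 3) : ee i ∈ RPSsimplex := by
  constructor
  · intro k; simp only [ee]; split <;> norm_num
  · fin_cases i <;> simp [ee, Fin.sum_univ_three]

lemma noAux (x y z a b c V : ℝ)
    (hx : 0 ≤ x) (hy : 0 ≤ y) (hz : 0 ≤ z)
    (hmus : x + y + z = 1)
    (h1 : 11/10 * b - c ≤ V)
    (h2 : 11/10 * c - a ≤ V)
    (h3 : 11/10 * a - b ≤ V)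
    (ha : 0 ≤ a) (hb : 0 ≤ b) (hc : 0 ≤ c)
    (hnus : a + b + c = 1)
    (hexp : V ≤ x * (b - c) + y * (c - a) + z * (a - b)) : False := by
  have hV : 1/30 ≤ V := by linarith
  have P1 : 0 ≤ x * (V - 1/330 - (b - c)) := mul_nonneg hx (by linarith)
  have P2 : 0 ≤ y * (V - 1/330 - (c - a)) := mul_nonneg hy (by linarith)
  have P3 : 0 ≤ z * (V - 1/330 - (a - b)) := mul_nonneg hz (by linarith)
  have hsV : x*V + y*V + z*V = V := by linear_combination V * hmus
  linarith

lemma pinAux (x y z a b c V : ℝ)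
    (hx : 0 ≤ x) (hy : 0 ≤ y) (hz : 0 ≤ z)
    (hmus : x + y + z = 1)
    (h1 : 11/10 * b - c ≤ V)
    (h2 : 11/10 * c - a ≤ V)
    (h3 : 11/10 * a - b ≤ V)
    (ha : 0 ≤ a) (hb : 0 ≤ b) (hc : 0 ≤ c)
    (hnus : a + b + c = 1)
    (hexp : V = x * (11/10 * b - c) + y * (c - a) + z * (a - b)) :
    x = 1 ∧ y = 0 ∧ z = 0 := by
  have hV : 1/30 ≤ V := by linarith
  have P1 : 0 ≤ x * (V - (11/10 * b - c)) := mul_nonneg hx (by linarith)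
  have P2 : 0 ≤ y * (V - 1/330 - (c - a)) := mul_nonneg hy (by linarith)
  have P3 : 0 ≤ z * (V - 1/330 - (a - b)) := mul_nonneg hz (by linarith)
  have hsV : x*V + y*V + z*V = V := by linear_combination V * hmus
  have hyz : y + z ≤ 0 := by linarith
  exact ⟨by linarith, by linarith, by linarith⟩

lemma expMstar (μ ν : Fin 3 → ℝ) : μ ⬝ᵥ Mstar.mulVec ν = μ 0 * (ν 1 - ν 2) + μ 1 * (ν 2 - ν 0) + μ 2 * (ν 0 - ν 1) := by
  simp [Mstar, Matrix.mulVec, dotProduct, Fin.sum_univ_three]; ring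

lemma expM1 (μ ν : Fin 3 → ℝ) : μ ⬝ᵥ M1.mulVec ν = μ 0 * (11/10 * ν 1 - ν 2) + μ 1 * (ν 2 - ν 0) + μ 2 * (ν 0 - ν 1) := by
  simp [M1, Matrix.mulVec, dotProduct, Fin.sum_univ_three]; ring

lemma expM2 (μ ν : Fin 3 → ℝ) : μ ⬝ᵥ M2.mulVec ν = μ 0 * (ν 1 - 11/10 * ν 2) + μ 1 * (ν 2 - ν 0) + μ 2 * (ν 0 - ν 1) := by
  simp [M2, Matrix.mulVec, dotProduct, Fin.sum_univ_three]; ring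

lemma expM3 (μ ν : Fin 3 → ℝ) : μ ⬝ᵥ M3.mulVec ν = μ 0 * (ν 1 - ν 2) + μ 1 * (ν 2 - 11/10 * ν 0) + μ 2 * (ν 0 - ν 1) := by
  simp [M3, Matrix.mulVec, dotProduct, Fin.sum_univ_three]; ring

lemma expM4 (μ ν : Fin 3 → ℝ) : μ ⬝ᵥ M4.mulVec ν = μ 0 * (ν 1 - ν 2) + μ 1 * (11/10 * ν 2 - ν 0) + μ 2 * (ν 0 - ν 1) := by
  simp [M4, Matrix.mulVec, dotProduct, Fin.sum_univ_three]; ring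

lemma expM5 (μ ν : Fin 3 → ℝ) : μ ⬝ᵥ M5.mulVec ν = μ 0 * (ν 1 - ν 2) + μ 1 * (ν 2 - ν 0) + μ 2 * (11/10 * ν 0 - ν 1) := by
  simp [M5, Matrix.mulVec, dotProduct, Fin.sum_univ_three]; ring

lemma expM6 (μ ν : Fin 3 → ℝ) : μ ⬝ᵥ M6.mulVec ν = μ 0 * (ν 1 - ν 2) + μ 1 * (ν 2 - ν 0) + μ 2 * (ν 0 - 11/10 * ν 1) := by
  simp [M6, Matrix.mulVec, dotProduct, Fin.sum_univ_three]; ring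

lemma rowM1 (ν : Fin 3 → ℝ) : ee 0 ⬝ᵥ M1.mulVec ν = 11/10 * ν 1 - ν 2 := by
  simp [ee, M1, Matrix.mulVec, dotProduct, Fin.sum_univ_three]; ring

lemma rowM4 (ν : Fin 3 → ℝ) : ee 1 ⬝ᵥ M4.mulVec ν = 11/10 * ν 2 - ν 0 := by
  simp [ee, M4, Matrix.mulVec, dotProduct, Fin.sum_univ_three]; ring

lemma rowM5 (ν : Fin 3 → ℝ) : ee 2 ⬝ᵥ M5.mulVec ν = 11/10 * ν 0 - ν 1 := by
  simp [ee, M5, Matrix.mulVec, dotProduct, Fin.sum_univ_three]; ring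

lemma colM2 (μ : Fin 3 → ℝ) : μ ⬝ᵥ M2.mulVec (ee 2) = μ 1 - 11/10 * μ 0 := by
  simp [ee, M2, Matrix.mulVec, dotProduct, Fin.sum_univ_three]; ring

lemma colM3 (μ : Fin 3 → ℝ) : μ ⬝ᵥ M3.mulVec (ee 0) = μ 2 - 11/10 * μ 1 := by
  simp [ee, M3, Matrix.mulVec, dotProduct, Fin.sum_univ_three]; ring

lemma colM6 (μ : Fin 3 → ℝ) : μ ⬝ᵥ M6.mulVec (ee 1) = μ 0 - 11/10 * μ 2 := by
  simp [ee, M6, Matrix.mulVec, dotProduct, Fin.sum_univ_three]; ring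

set_option maxHeartbeats 1000000 in
lemma upSide (Mup : Matrix (Fin 3) (Fin 3) ℝ) (μ ν : Fin 3 → ℝ)
    (hUp : Mup = Mstar ∨ Mup = M1 ∨ Mup = M2 ∨ Mup = M3 ∨ Mup = M4 ∨ Mup = M5 ∨ Mup = M6)
    (hx : 0 ≤ μ 0) (hy : 0 ≤ μ 1) (hz : 0 ≤ μ 2)
    (ha : 0 ≤ ν 0) (hb : 0 ≤ ν 1) (hc : 0 ≤ ν 2)
    (hμs : μ 0 + μ 1 + μ 2 = 1) (hνs : ν 0 + ν 1 + ν 2 = 1)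
    (hA1 : 11/10 * ν 1 - ν 2 ≤ μ ⬝ᵥ Mup.mulVec ν)
    (hA4 : 11/10 * ν 2 - ν 0 ≤ μ ⬝ᵥ Mup.mulVec ν)
    (hA5 : 11/10 * ν 0 - ν 1 ≤ μ ⬝ᵥ Mup.mulVec ν) :
    (Mup = M1 ∧ μ 0 = 1 ∧ μ 1 = 0 ∧ μ 2 = 0) ∨
    (Mup = M4 ∧ μ 1 = 1 ∧ μ 2 = 0 ∧ μ 0 = 0) ∨
    (Mup = M5 ∧ μ 2 = 1 ∧ μ 0 = 0 ∧ μ 1 = 0) := by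
  rcases hUp with rfl | rfl | rfl | rfl | rfl | rfl | rfl
  · exact (noAux (μ 0) (μ 1) (μ 2) (ν 0) (ν 1) (ν 2) (μ ⬝ᵥ Mstar.mulVec ν) hx hy hz hμs hA1 hA4 hA5 ha hb hc hνs (by linarith [expMstar μ ν])).elim
  · obtain ⟨h1, h2, h3⟩ := pinAux (μ 0) (μ 1) (μ 2) (ν 0) (ν 1) (ν 2) (μ ⬝ᵥ M1.mulVec ν) hx hy hz hμs hA1 hA4 hA5 ha hb hc hνs (by linarith [expM1 μ ν])
    exact Or.inl ⟨rfl, h1, h2, h3⟩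
  · exact (noAux (μ 0) (μ 1) (μ 2) (ν 0) (ν 1) (ν 2) (μ ⬝ᵥ M2.mulVec ν) hx hy hz hμs hA1 hA4 hA5 ha hb hc hνs (by linarith [expM2 μ ν, mul_nonneg hx hc])).elim
  · exact (noAux (μ 0) (μ 1) (μ 2) (ν 0) (ν 1) (ν 2) (μ ⬝ᵥ M3.mulVec ν) hx hy hz hμs hA1 hA4 hA5 ha hb hc hνs (by linarith [expM3 μ ν, mul_nonneg hy ha])).elim
  · obtain ⟨h1, h2, h3⟩ := pinAux (μ 1) (μ 2) (μ 0) (ν 1) (ν 2) (ν 0) (μ ⬝ᵥ M4.mulVec ν) hy hz hx (by linarith) hA4 hA5 hA1 hb hc ha (by linarith) (by linarith [expM4 μ ν])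
    exact Or.inr (Or.inl ⟨rfl, h1, h2, h3⟩)
  · obtain ⟨h1, h2, h3⟩ := pinAux (μ 2) (μ 0) (μ 1) (ν 2) (ν 0) (ν 1) (μ ⬝ᵥ M5.mulVec ν) hz hx hy (by linarith) hA5 hA1 hA4 hc ha hb (by linarith) (by linarith [expM5 μ ν])
    exact Or.inr (Or.inr ⟨rfl, h1, h2, h3⟩)
  · exact (noAux (μ 0) (μ 1) (μ 2) (ν 0) (ν 1) (ν 2) (μ ⬝ᵥ M6.mulVec ν) hx hy hz hμs hA1 hA4 hA5 ha hb hc hνs (by linarith [expM6 μ ν, mul_nonneg hz hb])).elim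

set_option maxHeartbeats 1000000 in
lemma lowSide (Mlow : Matrix (Fin 3) (Fin 3) ℝ) (μ ν : Fin 3 → ℝ)
    (hLow : Mlow = Mstar ∨ Mlow = M1 ∨ Mlow = M2 ∨ Mlow = M3 ∨ Mlow = M4 ∨ Mlow = M5 ∨ Mlow = M6)
    (hx : 0 ≤ μ 0) (hy : 0 ≤ μ 1) (hz : 0 ≤ μ 2)
    (ha : 0 ≤ ν 0) (hb : 0 ≤ ν 1) (hc : 0 ≤ ν 2)
    (hμs : μ 0 + μ 1 + μ 2 = 1) (hνs : ν 0 + ν 1 + ν 2 = 1)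
    (hB2 : μ ⬝ᵥ Mlow.mulVec ν ≤ μ 1 - 11/10 * μ 0)
    (hB3 : μ ⬝ᵥ Mlow.mulVec ν ≤ μ 2 - 11/10 * μ 1)
    (hB6 : μ ⬝ᵥ Mlow.mulVec ν ≤ μ 0 - 11/10 * μ 2) :
    (Mlow = M2 ∧ ν 2 = 1 ∧ ν 0 = 0 ∧ ν 1 = 0) ∨
    (Mlow = M3 ∧ ν 0 = 1 ∧ ν 1 = 0 ∧ ν 2 = 0) ∨
    (Mlow = M6 ∧ ν 1 = 1 ∧ ν 2 = 0 ∧ ν 0 = 0) := by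
  rcases hLow with rfl | rfl | rfl | rfl | rfl | rfl | rfl
  · exact (noAux (ν 2) (ν 0) (ν 1) (μ 2) (μ 0) (μ 1) (-(μ ⬝ᵥ Mstar.mulVec ν)) hc ha hb (by linarith) (by linarith) (by linarith) (by linarith) hz hx hy (by linarith) (by linarith [expMstar μ ν])).elim
  · exact (noAux (ν 2) (ν 0) (ν 1) (μ 2) (μ 0) (μ 1) (-(μ ⬝ᵥ M1.mulVec ν)) hc ha hb (by linarith) (by linarith) (by linarith) (by linarith) hz hx hy (by linarith) (by linarith [expM1 μ ν, mul_nonneg hx hb])).elim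
  · obtain ⟨h1, h2, h3⟩ := pinAux (ν 2) (ν 0) (ν 1) (μ 2) (μ 0) (μ 1) (-(μ ⬝ᵥ M2.mulVec ν)) hc ha hb (by linarith) (by linarith) (by linarith) (by linarith) hz hx hy (by linarith) (by linarith [expM2 μ ν])
    exact Or.inl ⟨rfl, h1, h2, h3⟩
  · obtain ⟨h1, h2, h3⟩ := pinAux (ν 0) (ν 1) (ν 2) (μ 0) (μ 1) (μ 2) (-(μ ⬝ᵥ M3.mulVec ν)) ha hb hc hνs (by linarith) (by linarith) (by linarith) hx hy hz hμs (by linarith [expM3 μ ν])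
    exact Or.inr (Or.inl ⟨rfl, h1, h2, h3⟩)
  · exact (noAux (ν 2) (ν 0) (ν 1) (μ 2) (μ 0) (μ 1) (-(μ ⬝ᵥ M4.mulVec ν)) hc ha hb (by linarith) (by linarith) (by linarith) (by linarith) hz hx hy (by linarith) (by linarith [expM4 μ ν, mul_nonneg hy hc])).elim
  · exact (noAux (ν 2) (ν 0) (ν 1) (μ 2) (μ 0) (μ 1) (-(μ ⬝ᵥ M5.mulVec ν)) hc ha hb (by linarith) (by linarith) (by linarith) (by linarith) hz hx hy (by linarith) (by linarith [expM5 μ ν, mul_nonneg hz ha])).elim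
  · obtain ⟨h1, h2, h3⟩ := pinAux (ν 1) (ν 2) (ν 0) (μ 1) (μ 2) (μ 0) (-(μ ⬝ᵥ M6.mulVec ν)) hb hc ha (by linarith) (by linarith) (by linarith) (by linarith) hy hz hx (by linarith) (by linarith [expM6 μ ν])
    exact Or.inr (Or.inr ⟨rfl, h1, h2, h3⟩)

set_option maxHeartbeats 1000000 in
/-- the subproblem has no solution: there are no matrices
`M̄, M̲ ∈ C` and distributions `μ, ν` such that `μ` is a best response to `ν`
under the optimistic matrix and `ν` is a best response to `μ` under the
pessimistic matrix. -/
theorem statement4 :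
    ¬ ∃ (Mup Mlow : Matrix (Fin 3) (Fin 3) ℝ) (μ ν : Fin 3 → ℝ),
      Mup ∈ Cset ∧ Mlow ∈ Cset ∧ μ ∈ RPSsimplex ∧ ν ∈ RPSsimplex ∧
      (∀ M ∈ Cset, ∀ μ' ∈ RPSsimplex, μ' ⬝ᵥ M.mulVec ν ≤ μ ⬝ᵥ Mup.mulVec ν) ∧
      (∀ M ∈ Cset, ∀ ν' ∈ RPSsimplex, μ ⬝ᵥ Mlow.mulVec ν ≤ μ ⬝ᵥ M.mulVec ν') := by
  rintro ⟨Mup, Mlow, μ, ν, hUp, hLow, ⟨hμ0, hμs'⟩, ⟨hν0, hνs'⟩, HA, HB⟩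
  have hx := hμ0 0; have hy := hμ0 1; have hz := hμ0 2
  have ha := hν0 0; have hb := hν0 1; have hc := hν0 2
  have hμs : μ 0 + μ 1 + μ 2 = 1 := by simpa [Fin.sum_univ_three] using hμs'
  have hνs : ν 0 + ν 1 + ν 2 = 1 := by simpa [Fin.sum_univ_three] using hνs'
  have c1 : M1 ∈ Cset := by simp [Cset]
  have c2 : M2 ∈ Cset := by simp [Cset]
  have c3 : M3 ∈ Cset := by simp [Cset]
  have c4 : M4 ∈ Cset := by simp [Cset]
  have c5 : M5 ∈ Cset := by simp [Cset]
  have c6 : M6 ∈ Cset := by simp [Cset]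
  have hA1 : 11/10 * ν 1 - ν 2 ≤ μ ⬝ᵥ Mup.mulVec ν := rowM1 ν ▸ HA M1 c1 (ee 0) (ee_mem 0)
  have hA4 : 11/10 * ν 2 - ν 0 ≤ μ ⬝ᵥ Mup.mulVec ν := rowM4 ν ▸ HA M4 c4 (ee 1) (ee_mem 1)
  have hA5 : 11/10 * ν 0 - ν 1 ≤ μ ⬝ᵥ Mup.mulVec ν := rowM5 ν ▸ HA M5 c5 (ee 2) (ee_mem 2)
  have hB2 : μ ⬝ᵥ Mlow.mulVec ν ≤ μ 1 - 11/10 * μ 0 := colM2 μ ▸ HB M2 c2 (ee 2) (ee_mem 2)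
  have hB3 : μ ⬝ᵥ Mlow.mulVec ν ≤ μ 2 - 11/10 * μ 1 := colM3 μ ▸ HB M3 c3 (ee 0) (ee_mem 0)
  have hB6 : μ ⬝ᵥ Mlow.mulVec ν ≤ μ 0 - 11/10 * μ 2 := colM6 μ ▸ HB M6 c6 (ee 1) (ee_mem 1)
  have hV : 1/30 ≤ μ ⬝ᵥ Mup.mulVec ν := by linarith
  have hW : μ ⬝ᵥ Mlow.mulVec ν ≤ -(1/30) := by linarith
  clear HA HB hμ0 hν0 hμs' hνs' c1 c2 c3 c4 c5 c6
  simp only [Cset, Set.mem_insert_iff, Set.mem_singleton_iff] at hUp hLow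
  obtain hU | hU | hU := upSide Mup μ ν hUp hx hy hz ha hb hc hμs hνs hA1 hA4 hA5 <;>
    obtain ⟨rfl, hm1, hm2, hm3⟩ := hU <;>
    [skip; skip; skip] <;>
    (obtain hL | hL | hL := lowSide Mlow μ ν hLow hx hy hz ha hb hc hμs hνs hB2 hB3 hB6 <;>
      obtain ⟨rfl, hn1, hn2, hn3⟩ := hL)
  · have e := expM1 μ ν
    rw [hm1, hm2, hm3, hn1, hn2, hn3] at e
    linarith [hV, e]
  · have e := expM1 μ ν
    rw [hm1, hm2, hm3, hn1, hn2, hn3] at e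
    linarith [hV, e]
  · have e := expM6 μ ν
    rw [hm1, hm2, hm3, hn1, hn2, hn3] at e
    linarith [hW, e]
  · have e := expM2 μ ν
    rw [hm1, hm2, hm3, hn1, hn2, hn3] at e
    linarith [hW, e]
  · have e := expM4 μ ν
    rw [hm1, hm2, hm3, hn1, hn2, hn3] at e
    linarith [hV, e]
  · have e := expM4 μ ν
    rw [hm1, hm2, hm3, hn1, hn2, hn3] at e
    linarith [hV, e]
  · have e := expM5 μ ν
    rw [hm1, hm2, hm3, hn1, hn2, hn3] at e
    linarith [hV, e]
  · have e := expM3 μ ν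
    rw [hm1, hm2, hm3, hn1, hn2, hn3] at e
    linarith [hW, e]
  · have e := expM5 μ ν
    rw [hm1, hm2, hm3, hn1, hn2, hn3] at e
    linarith [hV, e]
end

section
/- Let F be a class of functions from a finite set X of cardinality D to [−1, 1]. Then for any ε ∈ (0, 1], the distributional Eluder dimension of F with respect to the family of point-mass (Dirac) distributions on X satisfies dim_DE(F, {δ_x : x ∈ X}, ε) ≤ O(D · log(1 + 1/ε)). -/
/-- Expectation of `g` under a distribution on a finite set, given by the
probability weight vector `p`. -/
noncomputable def fexp {X : Type*} [Fintype X] (p g : X → ℝ) : ℝ := ∑ x, p x * g x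

/-- Distributional Eluder dimension over a finite domain, with distributions
represented by probability weight vectors: the length of the longest sequence
`ρ₁, …, ρₙ ∈ Π` such that for some `ε' ≥ ε`, each `ρᵢ` is `ε'`-independent of
its predecessors with respect to `G`. -/
noncomputable def dimDEfin {X : Type*} [Fintype X]
    (G : Set (X → ℝ)) (Pi : Set (X → ℝ)) (ε : ℝ) : ℕ :=
  sSup {n | ∃ ρ : Fin n → X → ℝ, (∀ i, ρ i ∈ Pi) ∧ ∃ ε' ≥ ε, ∀ i : Fin n,
    ∃ g ∈ G,
      Real.sqrt (∑ j : Fin n, if (j : ℕ) < (i : ℕ) then (fexp (ρ j) g) ^ 2 else 0) ≤ ε' ∧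
      ε' < |fexp (ρ i) g|}

/-- The family of point-mass (Dirac) distributions on `X`. -/
def Diracs (X : Type*) [Fintype X] [DecidableEq X] : Set (X → ℝ) :=
  {p | ∃ x : X, p = fun y => if y = x then 1 else 0}

lemma fexp_dirac {X : Type*} [Fintype X] [DecidableEq X] (x : X) (g : X → ℝ) :
    fexp (fun y => if y = x then 1 else 0) g = g x := by
  simp [fexp, ite_mul]

/-- a class of `[-1,1]`-valued functions on a finite domain of
cardinality `D` has distributional Eluder dimension at most
`O(D · log(1 + 1/ε))` with respect to point masses. -/
theorem statement15 :
    ∃ c : ℝ, 0 < c ∧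
      ∀ (X : Type) [Fintype X] [DecidableEq X] (F : Set (X → ℝ)) (ε : ℝ),
        0 < ε → ε ≤ 1 → (∀ g ∈ F, ∀ x, |g x| ≤ 1) →
        (dimDEfin F (Diracs X) ε : ℝ) ≤
          c * (Fintype.card X : ℝ) * Real.log (1 + 1 / ε) := by
  have hlog2 : 0 < Real.log 2 := Real.log_pos one_lt_two
  refine ⟨1 / Real.log 2, by positivity, ?_⟩
  intro X _ _ F ε hε hε1 hF
  have hD : dimDEfin F (Diracs X) ε ≤ Fintype.card X := by
    apply csSup_le'
    rintro n ⟨ρ, hρ, ε', hε', hind⟩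
    choose x hx using hρ
    have key : ∀ i j : Fin n, (j : ℕ) < (i : ℕ) → x i ≠ x j := by
      intro i j hji hxij
      obtain ⟨g, hgF, hsum, habs⟩ := hind i
      have hε'0 : 0 ≤ ε' := le_trans hε.le hε'
      set S := ∑ j' : Fin n, if (j' : ℕ) < (i : ℕ) then (fexp (ρ j') g) ^ 2 else 0 with hS
      have hS0 : 0 ≤ S := by
        apply Finset.sum_nonneg
        intro k _
        split <;> [exact sq_nonneg _; exact le_rfl]
      have hterm : (fexp (ρ j) g) ^ 2 ≤ S := by
        have := Finset.single_le_sum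
          (f := fun k : Fin n => if (k : ℕ) < (i : ℕ) then (fexp (ρ k) g) ^ 2 else 0)
          (fun k _ => by split <;> [exact sq_nonneg _; exact le_rfl]) (Finset.mem_univ j)
        simpa [hji, hS] using this
      have hSle : S ≤ ε' ^ 2 := by
        calc S = Real.sqrt S ^ 2 := (Real.sq_sqrt hS0).symm
        _ ≤ ε' ^ 2 := by
          have := Real.sqrt_nonneg S
          nlinarith [hsum]
      have h1 : fexp (ρ j) g = g (x j) := by rw [hx j]; exact fexp_dirac _ _
      have h2 : fexp (ρ i) g = g (x i) := by rw [hx i]; exact fexp_dirac _ _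
      have h3 : ε' ^ 2 < (g (x i)) ^ 2 := by
        have : ε' < |g (x i)| := by rwa [h2] at habs
        nlinarith [abs_nonneg (g (x i)), sq_abs (g (x i))]
      rw [h1] at hterm; rw [hxij] at h3
      linarith
    have hinj : Function.Injective x := by
      intro i j hij
      by_contra hne
      have : (i : ℕ) ≠ (j : ℕ) := fun h => hne (Fin.ext h)
      rcases this.lt_or_gt with h | h
      · exact key j i h hij.symm
      · exact key i j h hij
    simpa using Fintype.card_le_of_injective x hinj
  have hcast : (dimDEfin F (Diracs X) ε : ℝ) ≤ (Fintype.card X : ℝ) := by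
    exact_mod_cast hD
  have hlog : Real.log 2 ≤ Real.log (1 + 1 / ε) := by
    apply Real.log_le_log (by norm_num)
    have : (1 : ℝ) ≤ 1 / ε := by
      rw [le_div_iff₀ hε]; linarith
    linarith
  have hDnn : (0 : ℝ) ≤ (Fintype.card X : ℝ) := Nat.cast_nonneg _
  calc (dimDEfin F (Diracs X) ε : ℝ) ≤ (Fintype.card X : ℝ) := hcast
    _ ≤ 1 / Real.log 2 * (Fintype.card X : ℝ) * Real.log (1 + 1 / ε) := by
        rw [div_mul_eq_mul_div, one_mul, div_mul_eq_mul_div, le_div_iff₀ hlog2]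
        nlinarith
end
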